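/- arXiv:2409.18036 — 2 statements merged into one kernel-verified Lean document; each statement's English description precedes it below -/
import Mathlib

section
/- Let b ∈ (0,1) and define f(a) = (1 - (1-b)^{a/b}) / a for a ∈ (0,1). Then f is strictly decreasing in a on (0,1). -/
theorem stmt_5 (b : ℝ) (hb0 : 0 < b) (hb1 : b < 1) :
    StrictAntiOn (fun a : ℝ => (1 - (1 - b) ^ (a / b)) / a) (Set.Ioo 0 1) := by
  have h1b : (0:ℝ) < 1 - b := by linarith
  set k := Real.log (1 - b) / b with hk
  have hlog : Real.log (1 - b) < 0 := Real.log_neg h1b (by linarith)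
  have hkneg : k < 0 := div_neg_of_neg_of_pos hlog hb0
  have hfun : (fun a : ℝ => (1 - (1 - b) ^ (a / b)) / a)
      = fun a : ℝ => (1 - Real.exp (k * a)) / a := by
    funext a
    rw [Real.rpow_def_of_pos h1b]
    rw [hk]
    ring_nf
  rw [hfun]
  have hderiv : ∀ a : ℝ, a ≠ 0 → HasDerivAt (fun a : ℝ => (1 - Real.exp (k * a)) / a)
      ((-(k * Real.exp (k * a)) * a - (1 - Real.exp (k * a)) * 1) / a ^ 2) a := by
    intro a ha
    have h1 : HasDerivAt (fun a : ℝ => Real.exp (k * a)) (Real.exp (k * a) * k) a := by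
      simpa using ((hasDerivAt_id a).const_mul k).exp
    have h2 : HasDerivAt (fun a : ℝ => 1 - Real.exp (k * a)) (-(k * Real.exp (k * a))) a := by
      simpa [mul_comm] using h1.const_sub (1:ℝ)
    exact h2.div (hasDerivAt_id a) ha
  apply strictAntiOn_of_deriv_neg (convex_Ioo (0:ℝ) 1)
  · apply ContinuousOn.div
    · fun_prop
    · fun_prop
    · intro x hx
      exact ne_of_gt hx.1
  · intro a ha
    rw [interior_Ioo] at ha
    have ha0 : 0 < a := ha.1
    rw [(hderiv a (ne_of_gt ha0)).deriv]
    apply div_neg_of_neg_of_pos _ (by positivity)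
    -- need: -(k * exp (k*a)) * a - (1 - exp (k*a)) < 0
    -- i.e. exp(k*a) * (1 - k*a) < 1
    have hu : 0 < -(k * a) := by
      have := mul_pos (neg_pos.mpr hkneg) ha0
      linarith [this]
    have hexp : -(k * a) + 1 < Real.exp (-(k * a)) := Real.add_one_lt_exp (ne_of_gt hu)
    have hepos : 0 < Real.exp (k * a) := Real.exp_pos _
    have key : Real.exp (k * a) * (1 - k * a) < 1 := by
      have h := mul_lt_mul_of_pos_left hexp hepos
      rw [← Real.exp_add] at h
      simp at h
      nlinarith [h]
    nlinarith [key]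
end

section
/- For real p ∈ (0,1) and positive integer n with n·p < 1, the ratio (1 - (1-p)^n) / (n·p) is at least 1 - 1/e. -/
theorem stmt_6 (p : ℝ) (hp0 : 0 < p) (hp1 : p < 1) (n : ℕ) (hn : 0 < n)
    (hnp : (n : ℝ) * p < 1) :
    (1 - (1 - p) ^ n) / ((n : ℝ) * p) ≥ 1 - 1 / Real.exp 1 := by
  set x : ℝ := (n : ℝ) * p with hx
  have hx0 : 0 < x := mul_pos (by exact_mod_cast hn) hp0
  have hx1 : x ≤ 1 := le_of_lt hnp
  -- (1-p)^n ≤ exp(-x)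
  have h1 : (1 - p) ^ n ≤ Real.exp (-x) := by
    have hb : 1 - p ≤ Real.exp (-p) := by
      have := Real.add_one_le_exp (-p); linarith
    calc (1 - p) ^ n ≤ (Real.exp (-p)) ^ n :=
          pow_le_pow_left₀ (by linarith) hb n
      _ = Real.exp (-x) := by
          rw [← Real.exp_nat_mul]; ring_nf; rw [hx]
  -- convexity: exp(-x) ≤ (1-x) * 1 + x * exp(-1)
  have h2 : Real.exp (-x) ≤ (1 - x) * 1 + x * Real.exp (-1) := by
    have := convexOn_exp.2 (Set.mem_univ (0:ℝ)) (Set.mem_univ (-1:ℝ))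
      (by linarith : (0:ℝ) ≤ 1 - x) hx0.le (by ring)
    simpa [Real.exp_zero, mul_comm] using this
  rw [ge_iff_le, le_div_iff₀ hx0]
  have he : Real.exp (-1) = 1 / Real.exp 1 := by
    rw [Real.exp_neg]; ring
  nlinarith [h1, h2, Real.exp_pos 1]
end
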